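/- arXiv:1301.1708 — 2 statements merged into one kernel-verified Lean document; each statement's English description precedes it below -/
import Mathlib

section
/- Let ρ̄ ∈ ℝ be a constant and σ(ψ) = ψ² + 1. Fix x₁ ∈ ℝ, g₁ ∈ ℝ, and c₁ ∈ ℝ. Then any C² function g satisfying the implicit relation ∫_{g₁}^{g(x)} e^{ρ̄·arctan ψ}/√(1+ψ²) dψ = c₁(x − x₁), for all x in an interval, solves the ODE g''/(g')² = (g − ρ̄)/σ(g) wherever g' ≠ 0; moreover g'(x)·e^{ρ̄·arctan g(x)}/√(1 + g(x)²) = c₁ for all such x. -/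
open Real

noncomputable def QSf (ρbar : ℝ) : ℝ → ℝ :=
  fun ψ => Real.exp (ρbar * Real.arctan ψ) / Real.sqrt (1 + ψ ^ 2)

lemma QSf_cont (ρbar : ℝ) : Continuous (QSf ρbar) := by
  apply Continuous.div
  · exact (continuous_const.mul Real.continuous_arctan).rexp
  · exact (continuous_const.add (continuous_pow 2)).sqrt
  · intro ψ
    have : (0:ℝ) < 1 + ψ ^ 2 := by positivity
    exact (Real.sqrt_pos.2 this).ne'

lemma QSf_pos (ρbar ψ : ℝ) : 0 < QSf ρbar ψ :=
  div_pos (Real.exp_pos _) (Real.sqrt_pos.2 (by positivity))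

lemma QSf_hasDerivAt (ρbar y : ℝ) :
    HasDerivAt (QSf ρbar) (QSf ρbar y * ((ρbar - y) / (1 + y ^ 2))) y := by
  have hy : (0:ℝ) < 1 + y ^ 2 := by positivity
  have hsq : Real.sqrt (1 + y ^ 2) ≠ 0 := (Real.sqrt_pos.2 hy).ne'
  have h1 : HasDerivAt (fun ψ : ℝ => ρbar * Real.arctan ψ) (ρbar * (1 / (1 + y ^ 2))) y :=
    (Real.hasDerivAt_arctan y).const_mul ρbar
  have h2 : HasDerivAt (fun ψ : ℝ => Real.exp (ρbar * Real.arctan ψ))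
      (Real.exp (ρbar * Real.arctan y) * (ρbar * (1 / (1 + y ^ 2)))) y := h1.exp
  have h3 : HasDerivAt (fun ψ : ℝ => 1 + ψ ^ 2) (2 * y) y := by
    simpa using ((hasDerivAt_pow 2 y).const_add 1)
  have h4 : HasDerivAt (fun ψ : ℝ => Real.sqrt (1 + ψ ^ 2)) (y / Real.sqrt (1 + y ^ 2)) y := by
    have := (Real.hasDerivAt_sqrt hy.ne').comp y h3
    refine this.congr_deriv (Eq.symm ?_)
    field_simp
  have h5 := h2.div h4 hsq
  refine h5.congr_deriv (Eq.symm ?_)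
  rw [QSf]
  have hss : Real.sqrt (1 + y ^ 2) ^ 2 = 1 + y ^ 2 := Real.sq_sqrt hy.le
  field_simp
  linear_combination (-y) * hss

/-- The implicit relation ∫_{g₁}^{g(x)} e^{ρ̄ arctan ψ}/√(1+ψ²) dψ = c₁(x − x₁) yields
a solution of g''/(g')² = (g − ρ̄)/(g²+1) wherever g' ≠ 0, and
g' e^{ρ̄ arctan g}/√(1+g²) = c₁. -/
theorem stmt_4 (ρbar g₁ c₁ x₁ : ℝ) (g : ℝ → ℝ) (s : Set ℝ) (hs : IsOpen s)
    (hC2 : ContDiff ℝ 2 g)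
    (hrel : ∀ x ∈ s,
      (∫ ψ in g₁..(g x), Real.exp (ρbar * Real.arctan ψ) / Real.sqrt (1 + ψ ^ 2))
        = c₁ * (x - x₁)) :
    (∀ x ∈ s, deriv g x * Real.exp (ρbar * Real.arctan (g x)) /
        Real.sqrt (1 + (g x) ^ 2) = c₁) ∧
    (∀ x ∈ s, deriv g x ≠ 0 →
      deriv (deriv g) x / (deriv g x) ^ 2 = (g x - ρbar) / ((g x) ^ 2 + 1)) := by
  have hgd : Differentiable ℝ g := hC2.differentiable (by norm_num)
  have key : ∀ x ∈ s, deriv g x * QSf ρbar (g x) = c₁ := by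
    intro x hx
    have hg : HasDerivAt g (deriv g x) x := (hgd x).hasDerivAt
    have hF : HasDerivAt (fun u => ∫ ψ in g₁..u, QSf ρbar ψ) (QSf ρbar (g x)) (g x) :=
      intervalIntegral.integral_hasDerivAt_right
        ((QSf_cont ρbar).intervalIntegrable _ _)
        ((QSf_cont ρbar).stronglyMeasurableAtFilter _ _)
        (QSf_cont ρbar).continuousAt
    have hcomp : HasDerivAt (fun x => ∫ ψ in g₁..(g x), QSf ρbar ψ)
        (QSf ρbar (g x) * deriv g x) x := hF.comp x hg
    have hev : (fun x => c₁ * (x - x₁)) =ᶠ[nhds x] (fun x => ∫ ψ in g₁..(g x), QSf ρbar ψ) := by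
      filter_upwards [hs.mem_nhds hx] with y hy
      exact (hrel y hy).symm
    have hlin : HasDerivAt (fun x => c₁ * (x - x₁)) (QSf ρbar (g x) * deriv g x) x :=
      hcomp.congr_of_eventuallyEq hev
    have hlin2 : HasDerivAt (fun x => c₁ * (x - x₁)) c₁ x := by
      simpa using ((hasDerivAt_id x).sub_const x₁).const_mul c₁
    have := hlin.unique hlin2
    rw [← this]; ring
  constructor
  · intro x hx
    have := key x hx
    rw [← this, QSf]; ring
  · intro x hx hne
    have hg : HasDerivAt g (deriv g x) x := (hgd x).hasDerivAt
    have hdg : ContDiff ℝ 1 (deriv g) := by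
      have h2 : ContDiff ℝ (1+1) g := by norm_num; exact hC2
      exact (contDiff_succ_iff_deriv.mp h2).2.2
    have hdgd : HasDerivAt (deriv g) (deriv (deriv g) x) x :=
      ((hdg.differentiable one_ne_zero) x).hasDerivAt
    have hfg : HasDerivAt (fun x => QSf ρbar (g x))
        (QSf ρbar (g x) * ((ρbar - g x) / (1 + (g x) ^ 2)) * deriv g x) x :=
      (QSf_hasDerivAt ρbar (g x)).comp x hg
    have hprod : HasDerivAt (fun x => deriv g x * QSf ρbar (g x))
        (deriv (deriv g) x * QSf ρbar (g x) +
          deriv g x * (QSf ρbar (g x) * ((ρbar - g x) / (1 + (g x) ^ 2)) * deriv g x)) x :=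
      hdgd.mul hfg
    have hev : (fun x => deriv g x * QSf ρbar (g x)) =ᶠ[nhds x] (fun _ => c₁) := by
      filter_upwards [hs.mem_nhds hx] with y hy
      exact key y hy
    have hzero : HasDerivAt (fun x => deriv g x * QSf ρbar (g x)) 0 x :=
      (hasDerivAt_const x c₁).congr_of_eventuallyEq hev
    have hE := hprod.unique hzero
    have hfpos := QSf_pos ρbar (g x)
    have hgx : (0:ℝ) < 1 + (g x) ^ 2 := by positivity
    have hgx' : (g x) ^ 2 + 1 ≠ 0 := by positivity
    field_simp at hE ⊢
    nlinarith [sq_nonneg (deriv g x), hfpos, hE]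
end

section
/- For fixed g ∈ ℝ and ρ₋₁ < g, define G(ρ_A) = √(1+g²) · ∫_{ρ_{−1}}^{g} e^{−ρ_A(arctan g − arctan ψ)}/√(1+ψ²) dψ. Then as ρ_A → +∞, G(ρ_A) = (1+g²)/ρ_A − g(1+g²)/ρ_A² + O(ρ_A^{−3}). -/
open Real Asymptotics Filter MeasureTheory

noncomputable def sfn (x : ℝ) : ℝ := Real.sqrt (1 + x ^ 2)

lemma sfn_pos (x : ℝ) : 0 < sfn x := Real.sqrt_pos.2 (by positivity)

lemma sfn_sq (x : ℝ) : sfn x ^ 2 = 1 + x ^ 2 := Real.sq_sqrt (by positivity)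

lemma continuous_sfn : Continuous sfn := by
  unfold sfn; fun_prop

lemma hasDerivAt_sfn (x : ℝ) : HasDerivAt sfn (x / sfn x) x := by
  have h1 : HasDerivAt (fun y : ℝ => 1 + y ^ 2) (2 * x) x := by
    simpa using (hasDerivAt_pow 2 x).const_add 1
  have h2 := (Real.hasDerivAt_sqrt (by positivity : (1:ℝ) + x ^ 2 ≠ 0)).comp x h1
  have hs := (sfn_pos x).ne'
  refine h2.congr_deriv ?_
  simp only [sfn] at *
  field_simp

noncomputable def Efn (g ρ ψ : ℝ) : ℝ := Real.exp (-ρ * (Real.arctan g - Real.arctan ψ))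

lemma continuous_Efn (g ρ : ℝ) : Continuous (Efn g ρ) :=
  Real.continuous_exp.comp
    (continuous_const.mul (continuous_const.sub Real.continuous_arctan))

lemma hasDerivAt_Efn (g ρ ψ : ℝ) :
    HasDerivAt (Efn g ρ) (ρ / (1 + ψ ^ 2) * Efn g ρ ψ) ψ := by
  have h1 : HasDerivAt (fun x : ℝ => -ρ * (Real.arctan g - Real.arctan x))
      (ρ / (1 + ψ ^ 2)) ψ := by
    have h := ((Real.hasDerivAt_arctan ψ).const_sub (Real.arctan g)).const_mul (-ρ)
    refine h.congr_deriv ?_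
    field_simp
  have h2 := h1.exp
  unfold Efn
  refine h2.congr_deriv ?_
  exact mul_comm _ _

lemma Efn_nonneg (g ρ ψ : ℝ) : 0 ≤ Efn g ρ ψ := (Real.exp_pos _).le

lemma Efn_le_one (g ρ ψ : ℝ) (hρ : 0 ≤ ρ) (hψ : ψ ≤ g) : Efn g ρ ψ ≤ 1 := by
  rw [Efn, Real.exp_le_one_iff]
  have harc : Real.arctan ψ ≤ Real.arctan g := Real.arctan_strictMono.monotone hψ
  nlinarith

lemma Efn_at_g (g ρ : ℝ) : Efn g ρ g = 1 := by simp [Efn]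

lemma ibp (g ρm1 ρ : ℝ) (u u' : ℝ → ℝ) (hu : ∀ ψ, HasDerivAt u (u' ψ) ψ)
    (hc : Continuous u') (hcu : Continuous u) :
    (∫ ψ in ρm1..g, u' ψ * Efn g ρ ψ)
      + ρ * ∫ ψ in ρm1..g, u ψ / (1 + ψ ^ 2) * Efn g ρ ψ
      = u g - u ρm1 * Efn g ρ ρm1 := by
  have hE := continuous_Efn g ρ
  have hderiv : ∀ ψ ∈ Set.uIcc ρm1 g, HasDerivAt (fun x => u x * Efn g ρ x)
      (u' ψ * Efn g ρ ψ + ρ / (1 + ψ ^ 2) * (u ψ * Efn g ρ ψ)) ψ := by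
    intro ψ _
    have hm := (hu ψ).mul (hasDerivAt_Efn g ρ ψ)
    refine hm.congr_deriv ?_
    ring
  have hc2 : Continuous fun ψ : ℝ => ρ / (1 + ψ ^ 2) * (u ψ * Efn g ρ ψ) := by
    apply Continuous.mul _ (hcu.mul hE)
    exact continuous_const.div (by continuity) (fun x => by positivity)
  have hint : IntervalIntegrable
      (fun ψ => u' ψ * Efn g ρ ψ + ρ / (1 + ψ ^ 2) * (u ψ * Efn g ρ ψ))
      volume ρm1 g := ((hc.mul hE).add hc2).intervalIntegrable _ _
  have key := intervalIntegral.integral_eq_sub_of_hasDerivAt hderiv hint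
  rw [intervalIntegral.integral_add (f := fun ψ => u' ψ * Efn g ρ ψ) ((hc.mul hE).intervalIntegrable _ _)
      (hc2.intervalIntegrable _ _)] at key
  have hmul : (∫ ψ in ρm1..g, ρ / (1 + ψ ^ 2) * (u ψ * Efn g ρ ψ))
      = ρ * ∫ ψ in ρm1..g, u ψ / (1 + ψ ^ 2) * Efn g ρ ψ := by
    rw [← intervalIntegral.integral_const_mul]
    apply intervalIntegral.integral_congr
    intro ψ _
    ring
  rw [hmul] at key
  rw [key, Efn_at_g, mul_one]

noncomputable def wfn (x : ℝ) : ℝ := 4 * x * sfn x + (1 + 2 * x ^ 2) * (x / sfn x)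

lemma continuous_wfn : Continuous wfn := by
  apply Continuous.add
  · exact (continuous_const.mul continuous_id).mul continuous_sfn
  · exact (by continuity : Continuous fun x : ℝ => 1 + 2 * x ^ 2).mul
      (continuous_id.div continuous_sfn fun x => (sfn_pos x).ne')

lemma hasDerivAt_u0 (x : ℝ) : HasDerivAt sfn (x * sfn x / (1 + x ^ 2)) x := by
  have := hasDerivAt_sfn x
  convert this using 1
  rw [← sfn_sq x, pow_two, mul_div_mul_right _ _ (sfn_pos x).ne']

lemma hasDerivAt_u1 (x : ℝ) :
    HasDerivAt (fun y => y * sfn y) ((1 + 2 * x ^ 2) * sfn x / (1 + x ^ 2)) x := by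
  have hm := (hasDerivAt_id x).mul (hasDerivAt_sfn x)
  refine hm.congr_deriv ?_
  have hs := (sfn_pos x).ne'
  have h2 := sfn_sq x
  field_simp
  rw [id_eq]
  linear_combination (-x ^ 2) * h2

lemma hasDerivAt_u2 (x : ℝ) :
    HasDerivAt (fun y => (1 + 2 * y ^ 2) * sfn y) (wfn x) x := by
  have h1 : HasDerivAt (fun y : ℝ => 1 + 2 * y ^ 2) (4 * x) x := by
    have := ((hasDerivAt_pow 2 x).const_mul 2).const_add 1
    refine this.congr_deriv ?_
    ring
  exact h1.mul (hasDerivAt_sfn x)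

set_option maxHeartbeats 2000000 in
/-- Large-ρ_A expansion: G(ρ_A) = (1+g²)/ρ_A − g(1+g²)/ρ_A² + O(ρ_A⁻³). -/
theorem stmt_5 (g ρm1 : ℝ) (h : ρm1 < g) :
    (fun ρA : ℝ =>
        Real.sqrt (1 + g ^ 2) *
          (∫ ψ in ρm1..g,
            Real.exp (-ρA * (Real.arctan g - Real.arctan ψ)) / Real.sqrt (1 + ψ ^ 2))
        - ((1 + g ^ 2) / ρA - g * (1 + g ^ 2) / ρA ^ 2))
      =O[atTop] (fun ρA : ℝ => 1 / ρA ^ 3) := by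
  have hΔ : 0 < Real.arctan g - Real.arctan ρm1 :=
    sub_pos.2 (Real.arctan_strictMono h)
  set Δ : ℝ := Real.arctan g - Real.arctan ρm1 with hΔdef
  -- compact bound on wfn
  obtain ⟨C₂, hC₂⟩ := (isCompact_Icc :
      IsCompact (Set.Icc ρm1 g)).exists_bound_of_continuousOn continuous_wfn.continuousOn
  have hC₂0 : 0 ≤ C₂ := le_trans (norm_nonneg _) (hC₂ ρm1 ⟨le_refl _, h.le⟩)
  -- exponential smallness
  have ht : Tendsto (fun ρ : ℝ => ρ ^ 2 * Real.exp (-ρ * Δ)) atTop (nhds 0) := by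
    have h1 : Tendsto (fun ρ : ℝ => ρ * Δ) atTop atTop :=
      Tendsto.atTop_mul_const hΔ tendsto_id
    have h2 := (tendsto_pow_mul_exp_neg_atTop_nhds_zero 2).comp h1
    have h3 := h2.const_mul ((Δ ^ 2)⁻¹)
    rw [show ((Δ ^ 2)⁻¹ * 0 : ℝ) = 0 by ring] at h3
    refine h3.congr fun ρ => ?_
    simp only [Function.comp]
    have hne : Δ ≠ 0 := hΔ.ne'
    field_simp
  have hexp : ∀ᶠ ρ : ℝ in atTop, ρ ^ 2 * Real.exp (-ρ * Δ) ≤ 1 :=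
    ht.eventually (eventually_le_nhds one_pos)
  -- constants
  set S : ℝ := Real.sqrt (1 + g ^ 2) with hSdef
  have hS0 : 0 ≤ S := Real.sqrt_nonneg _
  have hSg : S * sfn g = 1 + g ^ 2 := by
    rw [hSdef]
    exact Real.mul_self_sqrt (by positivity)
  set K₂ : ℝ := |(1 + 2 * g ^ 2) * sfn g| + |(1 + 2 * ρm1 ^ 2) * sfn ρm1| with hK₂def
  set C : ℝ := S * (sfn ρm1 + |ρm1| * sfn ρm1 + K₂ + C₂ * (g - ρm1)) with hCdef
  rw [isBigO_iff]
  refine ⟨C, ?_⟩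
  filter_upwards [eventually_ge_atTop 1, hexp] with ρ hρ1 hρe
  have hρ0 : (0:ℝ) < ρ := lt_of_lt_of_le one_pos hρ1
  have hρne : ρ ≠ 0 := hρ0.ne'
  -- the three IBP identities
  have h0 := ibp g ρm1 ρ sfn (fun ψ => ψ * sfn ψ / (1 + ψ ^ 2))
    (fun ψ => hasDerivAt_u0 ψ)
    (by exact (continuous_id.mul continuous_sfn).div (by continuity) fun x => by positivity)
    continuous_sfn
  have h1 := ibp g ρm1 ρ (fun y => y * sfn y) (fun ψ => (1 + 2 * ψ ^ 2) * sfn ψ / (1 + ψ ^ 2))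
    (fun ψ => hasDerivAt_u1 ψ)
    (by exact ((by continuity : Continuous fun x : ℝ => 1 + 2 * x ^ 2).mul
        continuous_sfn).div (by continuity) fun x => by positivity)
    (continuous_id.mul continuous_sfn)
  have h2 := ibp g ρm1 ρ (fun y => (1 + 2 * y ^ 2) * sfn y) wfn
    (fun ψ => hasDerivAt_u2 ψ)
    continuous_wfn
    ((by continuity : Continuous fun x : ℝ => 1 + 2 * x ^ 2).mul continuous_sfn)
  -- name the integrals
  set I₀ : ℝ := ∫ ψ in ρm1..g, sfn ψ / (1 + ψ ^ 2) * Efn g ρ ψ with hI₀def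
  set I₁ : ℝ := ∫ ψ in ρm1..g, ψ * sfn ψ / (1 + ψ ^ 2) * Efn g ρ ψ with hI₁def
  set I₂ : ℝ := ∫ ψ in ρm1..g, (1 + 2 * ψ ^ 2) * sfn ψ / (1 + ψ ^ 2) * Efn g ρ ψ with hI₂def
  set J₂ : ℝ := ∫ ψ in ρm1..g, wfn ψ * Efn g ρ ψ with hJ₂def
  set Em : ℝ := Efn g ρ ρm1 with hEmdef
  -- the target integral equals I₀
  have hinteq : (∫ ψ in ρm1..g,
      Real.exp (-ρ * (Real.arctan g - Real.arctan ψ)) / Real.sqrt (1 + ψ ^ 2)) = I₀ := by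
    rw [hI₀def]
    apply intervalIntegral.integral_congr
    intro ψ _
    show Efn g ρ ψ / sfn ψ = sfn ψ / (1 + ψ ^ 2) * Efn g ρ ψ
    have hs := (sfn_pos ψ).ne'
    have hsq := sfn_sq ψ
    field_simp
    linear_combination -(Efn g ρ ψ) * hsq
  -- solve for I₀ (multiplied form)
  have hρ3 : (ρ:ℝ) ^ 3 ≠ 0 := by positivity
  have hI₀ : I₀ = (ρ ^ 2 * (sfn g - sfn ρm1 * Em)
      - ρ * (g * sfn g - ρm1 * sfn ρm1 * Em)
      + ((1 + 2 * g ^ 2) * sfn g - (1 + 2 * ρm1 ^ 2) * sfn ρm1 * Em - J₂)) / ρ ^ 3 := by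
    rw [eq_div_iff hρ3]
    linear_combination ρ ^ 2 * h0 - ρ * h1 + h2
  set N : ℝ := S * (ρm1 * sfn ρm1 * Em * ρ - sfn ρm1 * Em * ρ ^ 2
      + ((1 + 2 * g ^ 2) * sfn g - (1 + 2 * ρm1 ^ 2) * sfn ρm1 * Em - J₂)) with hNdef
  have hnum : S * (ρ ^ 2 * (sfn g - sfn ρm1 * Em)
      - ρ * (g * sfn g - ρm1 * sfn ρm1 * Em)
      + ((1 + 2 * g ^ 2) * sfn g - (1 + 2 * ρm1 ^ 2) * sfn ρm1 * Em - J₂))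
      - ((1 + g ^ 2) * ρ ^ 2 - g * (1 + g ^ 2) * ρ) = N := by
    rw [hNdef]
    linear_combination (ρ ^ 2 - g * ρ) * hSg
  have hfval : S * (∫ ψ in ρm1..g,
        Real.exp (-ρ * (Real.arctan g - Real.arctan ψ)) / Real.sqrt (1 + ψ ^ 2))
      - ((1 + g ^ 2) / ρ - g * (1 + g ^ 2) / ρ ^ 2) = N / ρ ^ 3 := by
    rw [hinteq, hI₀, ← mul_div_assoc, ← hnum, sub_div]
    congr 1
    rw [sub_div]
    congr 1
    · rw [div_eq_div_iff hρne hρ3]; ring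
    · rw [div_eq_div_iff (by positivity : (ρ:ℝ) ^ 2 ≠ 0) hρ3]; ring
  -- bounds
  have hEmeq : Em = Real.exp (-ρ * Δ) := by rw [hEmdef]; rfl
  have hEm0 : 0 ≤ Em := Efn_nonneg g ρ ρm1
  have hEm1 : Em ≤ 1 := Efn_le_one g ρ ρm1 hρ0.le h.le
  have hsp1 := sfn_pos ρm1
  have hspg := sfn_pos g
  -- |J₂| ≤ C₂ * (g - ρm1)
  have hJ₂bound : |J₂| ≤ C₂ * (g - ρm1) := by
    have hb : ∀ x ∈ Set.uIoc ρm1 g, ‖wfn x * Efn g ρ x‖ ≤ C₂ := by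
      intro x hx
      rw [Set.uIoc_of_le h.le] at hx
      have hxI : x ∈ Set.Icc ρm1 g := ⟨hx.1.le, hx.2⟩
      have hb1 := hC₂ x hxI
      have hb2 : Efn g ρ x ≤ 1 := Efn_le_one g ρ x hρ0.le hx.2
      have hb3 := Efn_nonneg g ρ x
      rw [norm_mul]
      calc ‖wfn x‖ * ‖Efn g ρ x‖ ≤ C₂ * 1 := by
            apply mul_le_mul hb1 _ (norm_nonneg _) hC₂0
            rw [Real.norm_eq_abs, abs_of_nonneg hb3]; exact hb2
        _ = C₂ := mul_one _
    have hni := intervalIntegral.norm_integral_le_of_norm_le_const hb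
    rw [abs_of_pos (sub_pos.2 h)] at hni
    simpa [hJ₂def, Real.norm_eq_abs] using hni
  -- exponential bounds
  have hEρ2 : Em * ρ ^ 2 ≤ 1 := by rw [hEmeq]; nlinarith [hρe]
  have hEρ1 : Em * ρ ≤ 1 := by nlinarith [hEm0, hρ1, hρ0]
  -- bound the numerator
  have hb2part : |(1 + 2 * g ^ 2) * sfn g - (1 + 2 * ρm1 ^ 2) * sfn ρm1 * Em| ≤ K₂ := by
    calc |(1 + 2 * g ^ 2) * sfn g - (1 + 2 * ρm1 ^ 2) * sfn ρm1 * Em|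
        ≤ |(1 + 2 * g ^ 2) * sfn g| + |(1 + 2 * ρm1 ^ 2) * sfn ρm1 * Em| := abs_sub _ _
      _ ≤ |(1 + 2 * g ^ 2) * sfn g| + |(1 + 2 * ρm1 ^ 2) * sfn ρm1| := by
          have : |(1 + 2 * ρm1 ^ 2) * sfn ρm1 * Em| ≤ |(1 + 2 * ρm1 ^ 2) * sfn ρm1| := by
            rw [abs_mul ((1 + 2 * ρm1 ^ 2) * sfn ρm1) Em, abs_of_nonneg hEm0]
            nlinarith [abs_nonneg ((1 + 2 * ρm1 ^ 2) * sfn ρm1), hEm1]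
          linarith
      _ = K₂ := by rw [hK₂def]
  have ht1 : |ρm1 * sfn ρm1 * Em * ρ| ≤ |ρm1| * sfn ρm1 := by
    rw [abs_mul, abs_mul, abs_mul, abs_of_nonneg hsp1.le, abs_of_nonneg hEm0,
      abs_of_pos hρ0]
    nlinarith [mul_le_mul_of_nonneg_left hEρ1 (mul_nonneg (abs_nonneg ρm1) hsp1.le)]
  have ht2 : |sfn ρm1 * Em * ρ ^ 2| ≤ sfn ρm1 := by
    rw [abs_mul, abs_mul, abs_of_nonneg hsp1.le, abs_of_nonneg hEm0,
      abs_of_nonneg (by positivity : (0:ℝ) ≤ ρ ^ 2)]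
    nlinarith [mul_le_mul_of_nonneg_left hEρ2 hsp1.le]
  have hN : |N| ≤ C := by
    rw [hNdef, abs_mul, abs_of_nonneg hS0, hCdef]
    apply mul_le_mul_of_nonneg_left _ hS0
    calc |ρm1 * sfn ρm1 * Em * ρ - sfn ρm1 * Em * ρ ^ 2
          + ((1 + 2 * g ^ 2) * sfn g - (1 + 2 * ρm1 ^ 2) * sfn ρm1 * Em - J₂)|
        ≤ |ρm1 * sfn ρm1 * Em * ρ - sfn ρm1 * Em * ρ ^ 2|
          + |(1 + 2 * g ^ 2) * sfn g - (1 + 2 * ρm1 ^ 2) * sfn ρm1 * Em - J₂| := abs_add_le _ _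
      _ ≤ (|ρm1 * sfn ρm1 * Em * ρ| + |sfn ρm1 * Em * ρ ^ 2|)
          + (|(1 + 2 * g ^ 2) * sfn g - (1 + 2 * ρm1 ^ 2) * sfn ρm1 * Em| + |J₂|) := by
          have hs1 := abs_sub (ρm1 * sfn ρm1 * Em * ρ) (sfn ρm1 * Em * ρ ^ 2)
          have hs2 := abs_sub ((1 + 2 * g ^ 2) * sfn g
            - (1 + 2 * ρm1 ^ 2) * sfn ρm1 * Em) J₂
          linarith
      _ ≤ sfn ρm1 + |ρm1| * sfn ρm1 + K₂ + C₂ * (g - ρm1) := by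
          linarith [ht1, ht2, hb2part, hJ₂bound]
  rw [Real.norm_eq_abs, Real.norm_eq_abs, hfval, abs_div,
    abs_of_pos (by positivity : (0:ℝ) < ρ ^ 3),
    abs_of_pos (by positivity : (0:ℝ) < 1 / ρ ^ 3)]
  calc |N| / ρ ^ 3 ≤ C / ρ ^ 3 := by gcongr
    _ = C * (1 / ρ ^ 3) := by ring
end
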